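/- Let X and Y be finite multisets of items over a strictly ranked ground set. If |Y| > |X|, then there exists an additive utility function u, consistent with the ranking and satisfying diminishing differences, such that u(Y) > u(X). In particular one may take u(x) = M·|Y| + Lev(x). -/
import Mathlib


variable {α : Type*} [Fintype α] [LinearOrder α]

/-- Borda level: the best item has level `Fintype.card α`, the worst has level 1. -/
def lev (x : α) : ℕ := (Finset.univ.filter (· ≤ x)).card

/-- Total Borda level of a multiset. -/
def levSum (X : Multiset α) : ℕ := (X.map lev).sum

/-- Sum of levels of the `k` best (highest-ranked) items of `X`. -/
def topLevSum (X : Multiset α) (k : ℕ) : ℕ := (((X.map lev).sort (· ≥ ·)).take k).sum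

/-- Sum of levels of the `k` worst (lowest-ranked) items of `X`. -/
def botLevSum (X : Multiset α) (k : ℕ) : ℕ := (((X.map lev).sort (· ≤ ·)).take k).sum

/-- Additive extension of `u` to multisets. -/
def msum (u : α → ℝ) (X : Multiset α) : ℝ := (X.map u).sum

/-- `u` is consistent with the ranking: `u x > u y` iff `x ≻ y`. -/
def Consistent (u : α → ℝ) : Prop := ∀ x y : α, u x > u y ↔ y < x

/-- Diminishing differences: for items with consecutive levels `x3 ≻ x2 ≻ x1`,
`u x3 - u x2 ≥ u x2 - u x1`. -/
def DD (u : α → ℝ) : Prop :=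
  ∀ x1 x2 x3 : α, lev x3 = lev x2 + 1 → lev x2 = lev x1 + 1 → u x2 - u x1 ≤ u x3 - u x2

/-- Increasing differences: for items with consecutive levels `x3 ≻ x2 ≻ x1`,
`u x3 - u x2 ≤ u x2 - u x1`. -/
def ID (u : α → ℝ) : Prop :=
  ∀ x1 x2 x3 : α, lev x3 = lev x2 + 1 → lev x2 = lev x1 + 1 → u x3 - u x2 ≤ u x2 - u x1

lemma lev_strictMono : StrictMono (lev (α := α)) := by
  intro x y hxy
  apply Finset.card_lt_card
  constructor
  · intro z hz
    simp only [Finset.mem_filter, Finset.mem_univ, true_and] at *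
    exact le_trans hz hxy.le
  · intro hsub
    have := hsub (Finset.mem_filter.mpr ⟨Finset.mem_univ y, le_refl y⟩)
    simp only [Finset.mem_filter] at this
    exact absurd this.2 (not_le.mpr hxy)

lemma one_le_lev (x : α) : 1 ≤ lev x := by
  have : x ∈ Finset.univ.filter (· ≤ x) := by simp
  exact Finset.card_pos.mpr ⟨x, this⟩

lemma lev_le_card (x : α) : lev x ≤ Fintype.card α :=
  Finset.card_filter_le _ _

/-- if |Y| > |X| then some positive additive DD utility consistent with
the ranking satisfies u(Y) > u(X). -/
theorem stmt2 (X Y : Multiset α) (h : Multiset.card X < Multiset.card Y) :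
    ∃ u : α → ℝ, (∀ x, 0 < u x) ∧ Consistent u ∧ DD u ∧ msum u X < msum u Y := by
  set M : ℕ := Fintype.card α with hM
  set C : ℝ := (M : ℝ) * (Multiset.card Y : ℝ) with hC
  refine ⟨fun x => C + (lev x : ℝ), ?_, ?_, ?_, ?_⟩
  · intro x
    dsimp only
    have h1 : (1 : ℝ) ≤ (lev x : ℝ) := by exact_mod_cast one_le_lev x
    have hC0 : 0 ≤ C := by positivity
    linarith
  · intro x y
    dsimp only
    constructor
    · intro hxy
      by_contra hnot
      have : lev x ≤ lev y := lev_strictMono.monotone (not_lt.mp hnot)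
      have : (lev x : ℝ) ≤ (lev y : ℝ) := by exact_mod_cast this
      linarith
    · intro hyx
      have := lev_strictMono hyx
      have : (lev y : ℝ) < (lev x : ℝ) := by exact_mod_cast this
      linarith
  · intro x1 x2 x3 h32 h21
    dsimp only
    have e32 : (lev x3 : ℝ) = (lev x2 : ℝ) + 1 := by exact_mod_cast h32
    have e21 : (lev x2 : ℝ) = (lev x1 : ℝ) + 1 := by exact_mod_cast h21
    linarith
  · have hMpos : 0 < M := by
      obtain ⟨y, _⟩ := Multiset.card_pos_iff_exists_mem.mp (Nat.lt_of_le_of_lt (Nat.zero_le _) h)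
      exact Fintype.card_pos_iff.mpr ⟨y⟩
    have hX : msum (fun x => C + (lev x : ℝ)) X ≤ (Multiset.card X : ℝ) * (C + M) := by
      rw [msum]
      have := Multiset.sum_le_card_nsmul (X.map (fun x => C + (lev x : ℝ))) (C + M) ?_
      · simpa only [Multiset.card_map, nsmul_eq_mul] using this
      · intro a ha
        obtain ⟨x, _, rfl⟩ := Multiset.mem_map.mp ha
        have : (lev x : ℝ) ≤ M := by exact_mod_cast lev_le_card x
        linarith
    have hY : (Multiset.card Y : ℝ) * C ≤ msum (fun x => C + (lev x : ℝ)) Y := by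
      rw [msum]
      have := Multiset.card_nsmul_le_sum (s := Y.map (fun x => C + (lev x : ℝ))) (a := C) ?_
      · simpa only [Multiset.card_map, nsmul_eq_mul] using this
      · intro a ha
        obtain ⟨x, _, rfl⟩ := Multiset.mem_map.mp ha
        have : (0 : ℝ) ≤ (lev x : ℝ) := by positivity
        linarith
    have hcard : (Multiset.card X : ℝ) + 1 ≤ (Multiset.card Y : ℝ) := by exact_mod_cast h
    have hM1 : (1 : ℝ) ≤ (M : ℝ) := by exact_mod_cast hMpos
    have hC0 : (0 : ℝ) ≤ C := by positivity
    have hx0 : (0 : ℝ) ≤ (Multiset.card X : ℝ) := Nat.cast_nonneg _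
    have hA : ((Multiset.card X : ℝ) + 1) * C ≤ (Multiset.card Y : ℝ) * C :=
      mul_le_mul_of_nonneg_right hcard hC0
    have hB : (M : ℝ) * ((Multiset.card X : ℝ) + 1) ≤ C := by
      rw [hC]
      exact mul_le_mul_of_nonneg_left hcard (Nat.cast_nonneg _)
    have key : (Multiset.card X : ℝ) * (C + M) < (Multiset.card Y : ℝ) * C := by
      nlinarith [hA, hB, hM1, hC0, hx0]
    linarith
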